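/- Two quadrilateral cross-sections of different types in a tetrahedron must intersect: let Δ ⊆ ℝ³ be the convex hull of four affinely independent points v₀, v₁, v₂, v₃. Suppose the affine plane P₁ meets the interiors of edges v₀v₂, v₀v₃, v₁v₂, v₁v₃ (giving a quadrilateral Q₁ = P₁ ∩ Δ separating {v₀,v₁} from {v₂,v₃}), and the affine plane P₂ meets the interiors of edges v₀v₁, v₀v₃, v₁v₂, v₂v₃ (giving a quadrilateral Q₂ = P₂ ∩ Δ separating {v₀,v₂} from {v₁,v₃}). Then Q₁ ∩ Q₂ ≠ ∅. -/

import Mathlib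

/-!
The plane `P₁` puts `v₂` on the side opposite to `v₀` and `v₁`, and `v₃` on the side opposite to
`v₀`; so `v₀, v₁` lie on one side and `v₂, v₃` on the other. The points `p ∈ (v₀, v₁)` and
`q ∈ (v₂, v₃)` where `P₂` crosses these edges therefore lie on opposite sides of `P₁` (sides are
convex), and `P₁` meets the segment `[p, q]`, which lies in `P₂ ∩ Δ`.
-/

open Set

section LinearOrderedField

variable {𝕜 : Type*} [Field 𝕜] [LinearOrder 𝕜] [IsStrictOrderedRing 𝕜]

theorem sign_sub_eq_neg_of_mem_openSegment {a b c : 𝕜} (hc : c ∈ openSegment 𝕜 a b) :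
    SignType.sign (b - c) = -SignType.sign (a - c) := by
  obtain ⟨s, t, hs, ht, hst, rfl⟩ := hc
  simp only [smul_eq_mul]
  have hb : b - (s * a + t * b) = s * (b - a) := by linear_combination (-b) * hst
  have ha : a - (s * a + t * b) = -(t * (b - a)) := by linear_combination (-a) * hst
  rw [hb, ha, Left.sign_neg, sign_mul, sign_mul, sign_pos hs, sign_pos ht, neg_neg]

theorem mem_segment_of_sign_sub_eq_neg {a b c : 𝕜}
    (h : SignType.sign (b - c) = -SignType.sign (a - c)) : c ∈ segment 𝕜 a b := by
  rcases lt_trichotomy a c with hac | rfl | hca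
  · rw [sign_neg (sub_neg.2 hac), neg_neg, sign_eq_one_iff, sub_pos] at h
    exact segment_eq_Icc (hac.trans h).le ▸ ⟨hac.le, h.le⟩
  · exact left_mem_segment 𝕜 _ _
  · rw [sign_pos (sub_pos.2 hca), sign_eq_neg_one_iff, sub_neg] at h
    exact segment_symm 𝕜 a b ▸ segment_eq_Icc (h.trans hca).le ▸ ⟨h.le, hca.le⟩

variable {E : Type*} [AddCommGroup E] [Module 𝕜 E]

def hyperplaneSide (f : E →ₗ[𝕜] 𝕜) (c : 𝕜) (x : E) : SignType :=
  SignType.sign (f x - c)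

theorem convex_setOf_hyperplaneSide_eq (f : E →ₗ[𝕜] 𝕜) (c : 𝕜) (s : SignType) :
    Convex 𝕜 {x | hyperplaneSide f c x = s} := by
  cases s
  · simpa [hyperplaneSide, sub_eq_zero] using convex_hyperplane f.isLinear c
  · simpa [hyperplaneSide, sign_eq_neg_one_iff] using convex_halfSpace_lt f.isLinear c
  · simpa [hyperplaneSide, sign_eq_one_iff] using convex_halfSpace_gt f.isLinear c

theorem hyperplaneSide_eq_neg_of_mem_openSegment {f : E →ₗ[𝕜] 𝕜} {c : 𝕜} {a b x : E}
    (hx : x ∈ openSegment 𝕜 a b) (hfx : f x = c) :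
    hyperplaneSide f c b = -hyperplaneSide f c a := by
  have hc : c ∈ openSegment 𝕜 (f a) (f b) :=
    hfx ▸ image_openSegment 𝕜 f.toAffineMap a b ▸ mem_image_of_mem f hx
  exact sign_sub_eq_neg_of_mem_openSegment hc

theorem exists_mem_segment_apply_eq_of_hyperplaneSide_eq_neg {f : E →ₗ[𝕜] 𝕜} {c : 𝕜} {p q : E}
    (h : hyperplaneSide f c q = -hyperplaneSide f c p) : ∃ x ∈ segment 𝕜 p q, f x = c := by
  have hc : c ∈ segment 𝕜 (f p) (f q) := mem_segment_of_sign_sub_eq_neg h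
  rwa [← f.coe_toAffineMap, ← image_segment] at hc

end LinearOrderedField

theorem quad_cross_sections_intersect_general (v : Fin 4 → EuclideanSpace ℝ (Fin 3))
    (f₁ f₂ : EuclideanSpace ℝ (Fin 3) →ₗ[ℝ] ℝ) (c₁ c₂ : ℝ)
    (h102 : ∃ x ∈ openSegment ℝ (v 0) (v 2), f₁ x = c₁)
    (h103 : ∃ x ∈ openSegment ℝ (v 0) (v 3), f₁ x = c₁)
    (h112 : ∃ x ∈ openSegment ℝ (v 1) (v 2), f₁ x = c₁)
    (h201 : ∃ x ∈ openSegment ℝ (v 0) (v 1), f₂ x = c₂)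
    (h223 : ∃ x ∈ openSegment ℝ (v 2) (v 3), f₂ x = c₂) :
    (({x | f₁ x = c₁} ∩ convexHull ℝ (Set.range v)) ∩
      ({x | f₂ x = c₂} ∩ convexHull ℝ (Set.range v))).Nonempty := by
  set side := hyperplaneSide f₁ c₁
  have side_eq_neg : ∀ {a b}, (∃ x ∈ openSegment ℝ a b, f₁ x = c₁) → side b = -side a :=
    fun ⟨_, hx, hfx⟩ => hyperplaneSide_eq_neg_of_mem_openSegment hx hfx
  have h2 : side (v 2) = -side (v 0) := side_eq_neg h102
  have h1 : side (v 1) = side (v 0) := neg_inj.1 ((side_eq_neg h112).symm.trans h2)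
  have h3 : side (v 3) = -side (v 0) := side_eq_neg h103
  obtain ⟨p, hp, hfp⟩ := h201
  obtain ⟨q, hq, hfq⟩ := h223
  have hp₁ : side p = side (v 0) :=
    (convex_setOf_hyperplaneSide_eq f₁ c₁ _).openSegment_subset rfl h1 hp
  have hq₁ : side q = -side p :=
    hp₁ ▸ (convex_setOf_hyperplaneSide_eq f₁ c₁ _).openSegment_subset h2 h3 hq
  obtain ⟨x, hx, hfx₁⟩ := exists_mem_segment_apply_eq_of_hyperplaneSide_eq_neg hq₁
  have hΔ := convex_convexHull ℝ (Set.range v)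
  have hvΔ (i : Fin 4) : v i ∈ convexHull ℝ (Set.range v) := subset_convexHull ℝ _ ⟨i, rfl⟩
  have hxΔ : x ∈ convexHull ℝ (Set.range v) := hΔ.segment_subset
    (hΔ.openSegment_subset (hvΔ 0) (hvΔ 1) hp) (hΔ.openSegment_subset (hvΔ 2) (hvΔ 3) hq) hx
  have hfx₂ : f₂ x = c₂ := (convex_hyperplane f₂.isLinear c₂).segment_subset hfp hfq hx
  exact ⟨x, ⟨hfx₁, hxΔ⟩, hfx₂, hxΔ⟩

/-- Two quadrilateral cross-sections of different types in a tetrahedron must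
intersect: if `P₁ = {f₁ = c₁}` meets the interiors of edges `v₀v₂, v₀v₃, v₁v₂,
v₁v₃` and `P₂ = {f₂ = c₂}` meets the interiors of edges `v₀v₁, v₀v₃, v₁v₂,
v₂v₃`, then the quadrilaterals `Q₁ = P₁ ∩ Δ` and `Q₂ = P₂ ∩ Δ` meet, where
`Δ` is the convex hull of the four vertices. -/
theorem quad_cross_sections_intersect (v : Fin 4 → EuclideanSpace ℝ (Fin 3))
    (hv : AffineIndependent ℝ v)
    (f₁ f₂ : EuclideanSpace ℝ (Fin 3) →ₗ[ℝ] ℝ) (c₁ c₂ : ℝ)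
    (hf₁ : f₁ ≠ 0) (hf₂ : f₂ ≠ 0)
    (hvert₁ : ∀ i, f₁ (v i) ≠ c₁) (hvert₂ : ∀ i, f₂ (v i) ≠ c₂)
    (h102 : ∃ x ∈ openSegment ℝ (v 0) (v 2), f₁ x = c₁)
    (h103 : ∃ x ∈ openSegment ℝ (v 0) (v 3), f₁ x = c₁)
    (h112 : ∃ x ∈ openSegment ℝ (v 1) (v 2), f₁ x = c₁)
    (h113 : ∃ x ∈ openSegment ℝ (v 1) (v 3), f₁ x = c₁)
    (h201 : ∃ x ∈ openSegment ℝ (v 0) (v 1), f₂ x = c₂)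
    (h203 : ∃ x ∈ openSegment ℝ (v 0) (v 3), f₂ x = c₂)
    (h212 : ∃ x ∈ openSegment ℝ (v 1) (v 2), f₂ x = c₂)
    (h223 : ∃ x ∈ openSegment ℝ (v 2) (v 3), f₂ x = c₂) :
    (({x | f₁ x = c₁} ∩ convexHull ℝ (Set.range v)) ∩
      ({x | f₂ x = c₂} ∩ convexHull ℝ (Set.range v))).Nonempty :=
  quad_cross_sections_intersect_general v f₁ f₂ c₁ c₂ h102 h103 h112 h201 h223
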